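/- arXiv:2402.10672 — 3 statements merged into one kernel-verified Lean document; each statement's English description precedes it below -/
import Mathlib

section
/- Suppose that 𝔐 is absorbing to Δ and satisfies the Conditions (W) and the Condition (SCB). Then for any bounded measurable function f : X → ℝ, the mapping (x,a) ↦ ∫_{∂Δ} f(y) Q(dy|x,a) is continuous on K. -/
open MeasureTheory ProbabilityTheory Topology Filter Set
open scoped ENNReal

noncomputable section

variable {X A : Type*}
  [MeasurableSpace X] [TopologicalSpace X] [PolishSpace X] [BorelSpace X]
  [MeasurableSpace A] [TopologicalSpace A] [PolishSpace A] [BorelSpace A]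

/-- The set `K` of feasible state-action pairs. -/
def Kset (𝒜 : X → Set A) : Set (X × A) := {p | p.2 ∈ 𝒜 p.1}

/-- Histories of length `n`: `(x₀,a₀,…,x_{n-1},a_{n-1},x_n)`. -/
abbrev Hist (X A : Type*) (n : ℕ) : Type _ := (Fin n → X × A) × X

/-- A control policy: a sequence of stochastic kernels on `A` given histories,
concentrated on the feasible actions at the current state. -/
structure Policy (𝒜 : X → Set A) where
  kernel : ∀ n : ℕ, Kernel (Hist X A n) A
  markov : ∀ n : ℕ, IsMarkovKernel (kernel n)
  feasible : ∀ (n : ℕ) (h : Hist X A n), kernel n h (𝒜 h.2) = 1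

/-- The canonical space `Ω = (X × A)^ℕ`. -/
abbrev Traj (X A : Type*) : Type _ := ℕ → X × A

/-- The history of length `n` of a trajectory. -/
def histMap (X A : Type*) (n : ℕ) : Traj X A → Hist X A n :=
  fun ω => (fun i : Fin n => ω i, (ω n).1)

/-- `P` is the strategic probability measure of the policy `π` (for the transition
kernel `Q` and initial distribution `η`): the Ionescu-Tulcea characterization via
the initial law and the conditional laws of `(A_n, X_{n+1})` given `H_n`. -/
def IsStrategic (𝒜 : X → Set A) (Q : Kernel (X × A) X) (η : Measure X)
    (π : Policy 𝒜) (P : Measure (Traj X A)) : Prop :=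
  IsProbabilityMeasure P ∧
  P.map (fun ω => (ω 0).1) = η ∧
  ∀ (n : ℕ) (D : Set (Hist X A n)) (C : Set A) (B : Set X),
    MeasurableSet D → MeasurableSet C → MeasurableSet B →
    P {ω | histMap X A n ω ∈ D ∧ (ω n).2 ∈ C ∧ (ω (n + 1)).1 ∈ B}
      = ∫⁻ h in D, ∫⁻ a in C, Q (h.2, a) B ∂(π.kernel n h) ∂(P.map (histMap X A n))

/-- The set of strategic probability measures (as measures). -/
def stratSet (𝒜 : X → Set A) (Q : Kernel (X × A) X) (η : Measure X) :
    Set (Measure (Traj X A)) :=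
  {P | ∃ π : Policy 𝒜, IsStrategic 𝒜 Q η π P}

/-- The set `S` of strategic probability measures, carrying the topology of weak
convergence of probability measures on `Ω`. -/
def stratSetP (𝒜 : X → Set A) (Q : Kernel (X × A) X) (η : Measure X) :
    Set (ProbabilityMeasure (Traj X A)) :=
  {P | (P : Measure (Traj X A)) ∈ stratSet 𝒜 Q η}

/-- `P{T_Δ > t}`, the probability that the state process has not entered `Δ` by time `t`. -/
def survival (Δ : Set X) (P : Measure (Traj X A)) (t : ℕ) : ℝ≥0∞ :=
  P {ω | ∀ k ≤ t, (ω k).1 ∉ Δ}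

/-- The expected hitting time `E[T_Δ] = Σ_{t≥0} P{T_Δ > t}`. -/
def expHittingTime (Δ : Set X) (P : Measure (Traj X A)) : ℝ≥0∞ :=
  ∑' t : ℕ, survival Δ P t

/-- The control model is absorbing to `Δ`. -/
def IsAbsorbing (𝒜 : X → Set A) (Q : Kernel (X × A) X) (η : Measure X) (Δ : Set X) : Prop :=
  (∀ p : X × A, p ∈ Kset 𝒜 → p.1 ∈ Δ → Q p Δ = 1) ∧
  (∀ P ∈ stratSet 𝒜 Q η, expHittingTime Δ P < ⊤)

/-- The control model is uniformly absorbing to `Δ`. -/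
def IsUniformlyAbsorbing (𝒜 : X → Set A) (Q : Kernel (X × A) X) (η : Measure X)
    (Δ : Set X) : Prop :=
  IsAbsorbing 𝒜 Q η Δ ∧
  Tendsto
    (fun n : ℕ => ⨆ P ∈ stratSet 𝒜 Q η,
      ∑' t : ℕ, if n < t then survival Δ P t else 0)
    atTop (𝓝 0)

/-- The occupation measure associated with a (strategic) measure `P` on `Ω`:
`μ(Γ) = Σ_t P{X_t ∈ Δᶜ, (X_t,A_t) ∈ Γ}`. -/
def occ (Δ : Set X) (P : Measure (Traj X A)) : Measure (X × A) :=
  Measure.sum fun t : ℕ => (P.map fun ω => ω t).restrict (Δᶜ ×ˢ (univ : Set A))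

/-- The set `O` of occupation measures, viewed inside the space of finite
nonnegative Borel measures on `X × A` with the weak topology. -/
def occSet (𝒜 : X → Set A) (Q : Kernel (X × A) X) (η : Measure X) (Δ : Set X) :
    Set (FiniteMeasure (X × A)) :=
  {ν | ∃ P ∈ stratSet 𝒜 Q η, (ν : Measure (X × A)) = occ Δ P}

/-- Continuity of the natural projection mapping `𝔓 : S → O`, `P_π ↦ μ_π`
(`S` and `O` carrying their respective weak topologies). -/
def ProjContinuous (𝒜 : X → Set A) (Q : Kernel (X × A) X) (η : Measure X)
    (Δ : Set X) : Prop :=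
  ∀ g : ProbabilityMeasure (Traj X A) → FiniteMeasure (X × A),
    (∀ P ∈ stratSetP 𝒜 Q η, (g P : Measure (X × A)) = occ Δ (P : Measure (Traj X A))) →
    ContinuousOn g (stratSetP 𝒜 Q η)

/-- Basic standing assumptions of the control model: nonempty measurable action
sets, `K` measurable and containing the graph of a measurable selector, `Q` a
stochastic kernel and `η` a probability measure. -/
def BasicModel (𝒜 : X → Set A) (Q : Kernel (X × A) X) (η : Measure X) : Prop :=
  (∀ x, (𝒜 x).Nonempty) ∧ (∀ x, MeasurableSet (𝒜 x)) ∧ MeasurableSet (Kset 𝒜) ∧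
  (∃ f : X → A, Measurable f ∧ ∀ x, f x ∈ 𝒜 x) ∧
  IsMarkovKernel Q ∧ IsProbabilityMeasure η

/-- Conditions (W): the action multifunction is compact-valued, upper
semicontinuous and weakly measurable, and `Q` is weakly continuous on `K`. -/
def CondW (𝒜 : X → Set A) (Q : Kernel (X × A) X) : Prop :=
  (∀ x, IsCompact (𝒜 x)) ∧
  (∀ (x : X) (U : Set A), IsOpen U → 𝒜 x ⊆ U → ∀ᶠ y in 𝓝 x, 𝒜 y ⊆ U) ∧
  (∀ U : Set A, IsOpen U → MeasurableSet {x | (𝒜 x ∩ U).Nonempty}) ∧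
  (∀ f : BoundedContinuousFunction X ℝ,
    ContinuousOn (fun p : X × A => ∫ y, f y ∂(Q p)) (Kset 𝒜))

/-- Conditions (S): compact action sets, weakly measurable action multifunction,
and `a ↦ Q(B|x,a)` continuous on `A(x)` for every `x` and measurable `B`. -/
def CondS (𝒜 : X → Set A) (Q : Kernel (X × A) X) : Prop :=
  (∀ x, IsCompact (𝒜 x)) ∧
  (∀ U : Set A, IsOpen U → MeasurableSet {x | (𝒜 x ∩ U).Nonempty}) ∧
  (∀ (x : X) (B : Set X), MeasurableSet B → ContinuousOn (fun a => Q (x, a) B) (𝒜 x))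

/-- Condition (SCB): strong continuity of the transition kernel at the boundary
of `Δ`: for every measurable `B ⊆ ∂Δ`, `(x,a) ↦ Q(B|x,a)` is continuous on `K`. -/
def CondSCB (𝒜 : X → Set A) (Q : Kernel (X × A) X) (Δ : Set X) : Prop :=
  ∀ B : Set X, B ⊆ frontier Δ → MeasurableSet B →
    ContinuousOn (fun p : X × A => Q p B) (Kset 𝒜)

/-- `σ` disintegrates `μ` over its `X`-marginal: `μ = μ^X ⊗ σ`. -/
def IsDisintegration (μ : Measure (X × A)) (σ : Kernel X A) : Prop :=
  ∀ Γ : Set (X × A), MeasurableSet Γ →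
    μ Γ = ∫⁻ x, σ x {a | (x, a) ∈ Γ} ∂(μ.map Prod.fst)

/-- The set `C` of finite measures on `X × A` satisfying the characteristic
equations. -/
def charSet (𝒜 : X → Set A) (Q : Kernel (X × A) X) (η : Measure X) (Δ : Set X) :
    Set (FiniteMeasure (X × A)) :=
  {μ | (μ : Measure (X × A)) (Kset 𝒜)ᶜ = 0 ∧
    ∀ B : Set X, MeasurableSet B →
      (μ : Measure (X × A)) (B ×ˢ (univ : Set A))
        = η (B ∩ Δᶜ) + ∫⁻ p : X × A, Q p (B ∩ Δᶜ) ∂(μ : Measure (X × A))}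

/-- The `ws`-topology on finite measures on `X × A`: the coarsest topology making
`μ ↦ ∫ f dμ` continuous for every bounded Carathéodory function `f`. -/
def wsTopology : TopologicalSpace (FiniteMeasure (X × A)) :=
  ⨅ (f : X × A → ℝ) (_ : Measurable f) (_ : ∃ C : ℝ, ∀ p, |f p| ≤ C)
    (_ : ∀ x : X, Continuous fun a : A => f (x, a)),
    TopologicalSpace.induced
      (fun μ : FiniteMeasure (X × A) => ∫ p, f p ∂(μ : Measure (X × A))) inferInstance

section GridFloor

variable {Y : Type*}

def gridFloor (f : Y → ℝ) (n : ℕ) (y : Y) : ℝ := ⌊f y * (n + 1)⌋ / (n + 1)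

lemma abs_sub_gridFloor_le (f : Y → ℝ) (n : ℕ) (y : Y) :
    |f y - gridFloor f n y| ≤ 1 / (n + 1) := by
  have hn : (0 : ℝ) < n + 1 := by positivity
  have hfract : f y - gridFloor f n y = Int.fract (f y * (n + 1)) / (n + 1) := by
    rw [gridFloor, ← Int.self_sub_floor, sub_div, mul_div_cancel_right₀ _ hn.ne']
  rw [hfract, abs_of_nonneg (by positivity)]
  exact div_le_div_of_nonneg_right (Int.fract_lt_one _).le hn.le

lemma measurable_gridFloor [MeasurableSpace Y] {f : Y → ℝ} (hf : Measurable f) (n : ℕ) :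
    Measurable (gridFloor f n) :=
  (measurable_from_top.comp (hf.mul_const _).floor).div_const _

lemma gridFloor_eq_sum_indicator {f : Y → ℝ} {C : ℝ} (hC : ∀ y, |f y| ≤ C) (n : ℕ) :
    gridFloor f n = fun y => ∑ k ∈ Finset.Icc ⌊-C * (n + 1)⌋ ⌊C * (n + 1)⌋,
      {y | ⌊f y * (n + 1)⌋ = k}.indicator (fun _ => (k : ℝ) / (n + 1)) y := by
  funext y
  have hmem : ⌊f y * (n + 1)⌋ ∈ Finset.Icc ⌊-C * (n + 1)⌋ ⌊C * (n + 1)⌋ := by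
    have hn : (0 : ℝ) ≤ n + 1 := by positivity
    rw [Finset.mem_Icc]
    exact ⟨Int.floor_mono (mul_le_mul_of_nonneg_right (neg_le_of_abs_le (hC y)) hn),
      Int.floor_mono (mul_le_mul_of_nonneg_right (le_of_abs_le (hC y)) hn)⟩
  rw [Finset.sum_eq_single_of_mem _ hmem fun k _ hk =>
      indicator_of_notMem (show y ∉ {y | ⌊f y * (n + 1)⌋ = k} from Ne.symm hk) _,
    indicator_of_mem (show y ∈ {y' | ⌊f y' * (n + 1)⌋ = ⌊f y * (n + 1)⌋} from rfl), gridFloor]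

end GridFloor

namespace ProbabilityTheory.Kernel

variable {P Y : Type*} [MeasurableSpace P] [MeasurableSpace Y]
  (κ : Kernel P Y) [IsFiniteKernel κ] {S : Set Y}

lemma dist_setIntegral_gridFloor_le {f : Y → ℝ} (hf : Measurable f) {C : ℝ}
    (hC : ∀ y, |f y| ≤ C) (n : ℕ) (p : P) :
    dist (∫ y in S, f y ∂(κ p)) (∫ y in S, gridFloor f n y ∂(κ p))
      ≤ 1 / (n + 1) * κ.bound.toReal := by
  have hfi : IntegrableOn f S (κ p) :=
    .of_bound (measure_lt_top _ _) hf.aestronglyMeasurable C (ae_of_all _ hC)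
  have hdi : IntegrableOn (fun y => f y - gridFloor f n y) S (κ p) :=
    .of_bound (measure_lt_top _ _)
      (hf.sub (measurable_gridFloor hf n)).aestronglyMeasurable _
      (ae_of_all _ (abs_sub_gridFloor_le f n))
  have hgi : IntegrableOn (gridFloor f n) S (κ p) := by
    simpa only [Pi.sub_def, sub_sub_cancel] using hfi.sub hdi
  rw [dist_eq_norm, ← integral_sub hfi hgi]
  calc ‖∫ y in S, (f y - gridFloor f n y) ∂(κ p)‖
      ≤ 1 / (n + 1) * (κ p).real S :=
        norm_setIntegral_le_of_norm_le_const (measure_lt_top _ _)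
          fun y _ => abs_sub_gridFloor_le f n y
    _ ≤ 1 / (n + 1) * κ.bound.toReal := by
        gcongr
        exact ENNReal.toReal_mono κ.bound_ne_top (κ.measure_le_bound p S)

variable [TopologicalSpace P] {K : Set P}

lemma continuousOn_setIntegral_indicator_const (hS : MeasurableSet S)
    (hcont : ∀ B ⊆ S, MeasurableSet B → ContinuousOn (fun p => κ p B) K)
    {B : Set Y} (hB : MeasurableSet B) (c : ℝ) :
    ContinuousOn (fun p => ∫ y in S, B.indicator (fun _ => c) y ∂(κ p)) K := by
  have hmass : ContinuousOn (fun p => (κ p (B ∩ S)).toReal) K := fun p hp =>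
    (ENNReal.tendsto_toReal (measure_ne_top _ _)).comp
      (hcont _ inter_subset_right (hB.inter hS) p hp)
  refine (hmass.mul (continuousOn_const (c := c))).congr fun p _ => ?_
  rw [integral_indicator hB, MeasureTheory.setIntegral_const, measureReal_def,
    Measure.restrict_apply hB, smul_eq_mul, Pi.mul_apply]

lemma continuousOn_setIntegral_gridFloor (hS : MeasurableSet S)
    (hcont : ∀ B ⊆ S, MeasurableSet B → ContinuousOn (fun p => κ p B) K)
    {f : Y → ℝ} (hf : Measurable f) {C : ℝ} (hC : ∀ y, |f y| ≤ C) (n : ℕ) :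
    ContinuousOn (fun p => ∫ y in S, gridFloor f n y ∂(κ p)) K := by
  have hlevel : ∀ k : ℤ, MeasurableSet {y | ⌊f y * (n + 1)⌋ = k} := fun k =>
    (hf.mul_const _).floor (measurableSet_singleton k)
  refine (continuousOn_finsetSum (Finset.Icc ⌊-C * (n + 1)⌋ ⌊C * (n + 1)⌋) fun k _ =>
    κ.continuousOn_setIntegral_indicator_const hS hcont (hlevel k) ((k : ℝ) / (n + 1))).congr
    fun p _ => ?_
  rw [gridFloor_eq_sum_indicator hC n]
  exact integral_finsetSum _ fun k _ =>
    (integrable_indicator_iff (hlevel k)).2 (integrableOn_const (measure_ne_top _ _))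

/-- The step functions `gridFloor f n` converge to `f` uniformly, and their integrals are finite
combinations of masses `κ p B` with `B ⊆ S`. -/
theorem continuousOn_setIntegral_of_continuousOn_measure (hS : MeasurableSet S)
    (hcont : ∀ B ⊆ S, MeasurableSet B → ContinuousOn (fun p => κ p B) K)
    {f : Y → ℝ} (hf : Measurable f) (hbd : ∃ C : ℝ, ∀ y, |f y| ≤ C) :
    ContinuousOn (fun p => ∫ y in S, f y ∂(κ p)) K := by
  obtain ⟨C, hC⟩ := hbd
  refine TendstoUniformlyOn.continuousOn (F := fun n p => ∫ y in S, gridFloor f n y ∂(κ p))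
    ?_ (Frequently.of_forall (f := atTop) (κ.continuousOn_setIntegral_gridFloor hS hcont hf hC))
  have herr : Tendsto (fun n : ℕ => 1 / ((n : ℝ) + 1) * κ.bound.toReal) atTop (𝓝 0) := by
    simpa using tendsto_one_div_add_atTop_nhds_zero_nat.mul_const κ.bound.toReal
  rw [Metric.tendstoUniformlyOn_iff]
  intro ε hε
  filter_upwards [herr.eventually (gt_mem_nhds hε)] with n hn p _
  exact (κ.dist_setIntegral_gridFloor_le hf hC n p).trans_lt hn

end ProbabilityTheory.Kernel

theorem continuousOn_integral_frontier_general
    (𝒜 : X → Set A) (Q : Kernel (X × A) X) (η : Measure X) (Δ : Set X)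
    (hbasic : BasicModel 𝒜 Q η)
    (hscb : CondSCB 𝒜 Q Δ)
    (f : X → ℝ) (hf : Measurable f) (hbd : ∃ C : ℝ, ∀ x, |f x| ≤ C) :
    ContinuousOn (fun p : X × A => ∫ y in frontier Δ, f y ∂(Q p)) (Kset 𝒜) :=
  have : IsMarkovKernel Q := hbasic.2.2.2.2.1
  Q.continuousOn_setIntegral_of_continuousOn_measure isClosed_frontier.measurableSet hscb hf hbd

/-- under Conditions (W) and (SCB), for any bounded measurable
`f : X → ℝ`, the map `(x,a) ↦ ∫_{∂Δ} f(y) Q(dy|x,a)` is continuous on `K`. -/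
theorem continuousOn_integral_frontier
    (𝒜 : X → Set A) (Q : Kernel (X × A) X) (η : Measure X) (Δ : Set X)
    (hbasic : BasicModel 𝒜 Q η) (hΔ : MeasurableSet Δ)
    (habs : IsAbsorbing 𝒜 Q η Δ)
    (hW : CondW 𝒜 Q) (hscb : CondSCB 𝒜 Q Δ)
    (f : X → ℝ) (hf : Measurable f) (hbd : ∃ C : ℝ, ∀ x, |f x| ≤ C) :
    ContinuousOn (fun p : X × A => ∫ y in frontier Δ, f y ∂(Q p)) (Kset 𝒜) :=
  continuousOn_integral_frontier_general 𝒜 Q η Δ hbasic hscb f hf hbd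

end
end

section
/- Suppose that 𝔐 is absorbing to Δ and satisfies the Conditions (W) and the Condition (SCB). Then for any bounded continuous function f : X → ℝ, the mapping (x,a) ↦ ∫_X f(y) 1_{Δᶜ}(y) Q(dy|x,a) is continuous on K. -/
/-!
Let `pₙ → p` in `K` and write `μₙ = Q(·|pₙ)`, `μ = Q(·|p)`. By (W) `μₙ → μ` weakly and by (SCB)
`μₙ B → μ B` for every measurable `B ⊆ ∂Δ`. Splitting a set `T` into the part `T \ ∂Δ` and the
part `T ∩ ∂Δ` shows `μ T ≤ liminf μₙ T` whenever `T \ ∂Δ` is open (portmanteau for the first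
part, setwise convergence for the second), and then, by the layer-cake formula,
`∫_T g dμ ≤ liminf ∫_T g dμₙ` for continuous `g ≥ 0`. Both `T = Δᶜ` and `T = Δ` qualify, and the
two integrals add up to `∫ g dμₙ → ∫ g dμ`, so neither lower bound can be strict in the limit.
-/

open MeasureTheory ProbabilityTheory Topology Filter Set
open scoped ENNReal

noncomputable section

variable {X A : Type*}
  [MeasurableSpace X] [TopologicalSpace X] [PolishSpace X] [BorelSpace X]
  [MeasurableSpace A] [TopologicalSpace A] [PolishSpace A] [BorelSpace A]

open scoped BoundedContinuousFunction

theorem ENNReal.le_liminf_add {ι : Type*} {L : Filter ι} (u v : ι → ℝ≥0∞) :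
    liminf u L + liminf v L ≤ liminf (u + v) L := by
  refine (le_liminf_iff).2 fun c hc => ?_
  rcases eq_or_ne (liminf u L) 0 with hu | hu
  · rw [hu, zero_add] at hc
    exact (eventually_lt_of_lt_liminf hc).mono fun i hi => hi.trans_le le_add_self
  rcases eq_or_ne (liminf v L) 0 with hv | hv
  · rw [hv, add_zero] at hc
    exact (eventually_lt_of_lt_liminf hc).mono fun i hi => hi.trans_le le_self_add
  obtain ⟨a, ha, b, hb, hab⟩ := ENNReal.exists_lt_add_of_lt_add hc hu hv
  filter_upwards [eventually_lt_of_lt_liminf ha, eventually_lt_of_lt_liminf hb] with i hai hbi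
  exact hab.trans (ENNReal.add_lt_add hai hbi)

theorem tendsto_of_tendsto_add_of_eventually_gt {ι : Type*} {L : Filter ι} {u v : ι → ℝ} {a b : ℝ}
    (hu : ∀ c < a, ∀ᶠ i in L, c < u i) (hv : ∀ c < b, ∀ᶠ i in L, c < v i)
    (huv : Tendsto (u + v) L (𝓝 (a + b))) : Tendsto u L (𝓝 a) := by
  refine tendsto_order.2 ⟨hu, fun c hc => ?_⟩
  filter_upwards [hv (b - (c - a) / 2) (by linarith),
    (tendsto_order.1 huv).2 (a + b + (c - a) / 2) (by linarith)] with i hvi huvi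
  simp only [Pi.add_apply] at huvi
  linarith

theorem eventually_lt_toReal_of_le_liminf {ι : Type*} {L : Filter ι} {u : ι → ℝ≥0∞} {a : ℝ≥0∞}
    (hu : ∀ i, u i ≠ ∞) (h : a ≤ liminf u L) {c : ℝ} (hc : c < a.toReal) :
    ∀ᶠ i in L, c < (u i).toReal := by
  rcases lt_or_ge c 0 with hc0 | hc0
  · exact Eventually.of_forall fun i => hc0.trans_le ENNReal.toReal_nonneg
  have ha : a ≠ ∞ := by rintro rfl; simp at hc; linarith
  have hlt : ENNReal.ofReal c < a := (ENNReal.ofReal_lt_iff_lt_toReal hc0 ha).2 hc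
  exact (eventually_lt_of_lt_liminf (hlt.trans_le h)).mono fun i hi =>
    (ENNReal.ofReal_lt_iff_lt_toReal hc0 (hu i)).1 hi

section Portmanteau

variable {Ω : Type*} [MeasurableSpace Ω] [TopologicalSpace Ω] [OpensMeasurableSpace Ω]
  [HasOuterApproxClosed Ω] {μ : ProbabilityMeasure Ω} {μs : ℕ → ProbabilityMeasure Ω}

theorem le_liminf_measure_of_isOpen_sdiff (hμs : Tendsto μs atTop (𝓝 μ)) {F : Set Ω}
    (hF : MeasurableSet F)
    (hμsF : ∀ B ⊆ F, MeasurableSet B →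
      Tendsto (fun n => (μs n : Measure Ω) B) atTop (𝓝 ((μ : Measure Ω) B)))
    {T : Set Ω} (hT : MeasurableSet T) (hTF : IsOpen (T \ F)) :
    (μ : Measure Ω) T ≤ atTop.liminf fun n => (μs n : Measure Ω) T :=
  calc (μ : Measure Ω) T = (μ : Measure Ω) (T \ F) + (μ : Measure Ω) (T ∩ F) :=
        (measure_sdiff_add_inter T hF).symm
    _ ≤ (atTop.liminf fun n => (μs n : Measure Ω) (T \ F))
          + atTop.liminf fun n => (μs n : Measure Ω) (T ∩ F) :=
        add_le_add (ProbabilityMeasure.le_liminf_measure_open_of_tendsto hμs hTF)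
          (hμsF _ inter_subset_right (hT.inter hF)).liminf_eq.ge
    _ ≤ atTop.liminf fun n => (μs n : Measure Ω) T := by
        refine (ENNReal.le_liminf_add _ _).trans_eq ?_
        simp only [Pi.add_def, measure_sdiff_add_inter T hF]

variable {S : Set Ω}
    (hμs : Tendsto μs atTop (𝓝 μ))
    (hμsS : ∀ B ⊆ frontier S, MeasurableSet B →
      Tendsto (fun n => (μs n : Measure Ω) B) atTop (𝓝 ((μ : Measure Ω) B)))
include hμs hμsS

theorem lintegral_le_liminf_lintegral_of_tendsto_measure_frontier (hS : MeasurableSet S)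
    {g : Ω → ℝ} (hg : Continuous g) (hg₀ : 0 ≤ g) :
    ∫⁻ x in S, ENNReal.ofReal (g x) ∂μ
      ≤ atTop.liminf fun n => ∫⁻ x in S, ENNReal.ofReal (g x) ∂(μs n) :=
  lintegral_le_liminf_lintegral_of_forall_isOpen_measure_le_liminf_measure hg hg₀ fun G hG => by
    simp only [Measure.restrict_apply hG.measurableSet]
    refine le_liminf_measure_of_isOpen_sdiff hμs isClosed_frontier.measurableSet hμsS
      (hG.measurableSet.inter hS) ?_
    rw [inter_sdiff_assoc, self_sdiff_frontier]
    exact hG.inter isOpen_interior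

theorem eventually_lt_setIntegral_of_tendsto_measure_frontier (hS : MeasurableSet S)
    {g : Ω →ᵇ ℝ} (hg₀ : 0 ≤ g) {c : ℝ} (hc : c < ∫ x in S, g x ∂μ) :
    ∀ᶠ n in atTop, c < ∫ x in S, g x ∂(μs n) := by
  have hint (ν : Measure Ω) : ∫ x in S, g x ∂ν = (∫⁻ x in S, ENNReal.ofReal (g x) ∂ν).toReal :=
    integral_eq_lintegral_of_nonneg_ae (Eventually.of_forall hg₀)
      g.continuous.aestronglyMeasurable
  simp only [hint] at hc ⊢
  exact eventually_lt_toReal_of_le_liminf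
    (fun n => ((g.integrable (μs n : Measure Ω)).restrict.lintegral_lt_top).ne)
    (lintegral_le_liminf_lintegral_of_tendsto_measure_frontier hμs hμsS hS g.continuous hg₀) hc

theorem tendsto_setIntegral_of_tendsto_measure_frontier (hS : MeasurableSet S) (f : Ω →ᵇ ℝ) :
    Tendsto (fun n => ∫ x in S, f x ∂(μs n)) atTop (𝓝 (∫ x in S, f x ∂μ)) := by
  have hμsSc : ∀ B ⊆ frontier Sᶜ, MeasurableSet B →
      Tendsto (fun n => (μs n : Measure Ω) B) atTop (𝓝 ((μ : Measure Ω) B)) := by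
    rwa [frontier_compl]
  have of_nonneg (g : Ω →ᵇ ℝ) (hg₀ : 0 ≤ g) :
      Tendsto (fun n => ∫ x in S, g x ∂(μs n)) atTop (𝓝 (∫ x in S, g x ∂μ)) := by
    refine tendsto_of_tendsto_add_of_eventually_gt
      (fun c => eventually_lt_setIntegral_of_tendsto_measure_frontier hμs hμsS hS hg₀)
      (fun c => eventually_lt_setIntegral_of_tendsto_measure_frontier hμs hμsSc hS.compl hg₀) ?_
    simp only [Pi.add_def, integral_add_compl hS (g.integrable _)]
    exact ProbabilityMeasure.tendsto_iff_forall_integral_tendsto.1 hμs g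
  have hsub (ν : Measure Ω) [IsFiniteMeasure ν] :
      ∫ x in S, (f + .const Ω ‖f‖) x ∂ν - ∫ x in S, (.const Ω ‖f‖ : Ω →ᵇ ℝ) x ∂ν
        = ∫ x in S, f x ∂ν := by
    simp only [BoundedContinuousFunction.coe_add, BoundedContinuousFunction.const_apply,
      Pi.add_apply]
    rw [integral_add (f.integrable ν).restrict (integrable_const _), add_sub_cancel_right]
  simpa only [hsub] using (of_nonneg _ f.add_norm_nonneg).sub
    (of_nonneg (.const Ω ‖f‖) fun _ => norm_nonneg f)

end Portmanteau

theorem continuousOn_setIntegral_of_continuousOn_measure_frontier {Ω Y : Type*}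
    [MeasurableSpace Ω] [TopologicalSpace Ω] [OpensMeasurableSpace Ω] [HasOuterApproxClosed Ω]
    [TopologicalSpace Y] [FirstCountableTopology Y]
    {κ : Y → ProbabilityMeasure Ω} {K : Set Y} (hκ : ContinuousOn κ K)
    {S : Set Ω} (hS : MeasurableSet S)
    (hκS : ∀ B ⊆ frontier S, MeasurableSet B → ContinuousOn (fun y => (κ y : Measure Ω) B) K)
    (f : Ω →ᵇ ℝ) :
    ContinuousOn (fun y => ∫ x in S, f x ∂(κ y : Measure Ω)) K := fun y hy =>
  tendsto_iff_seq_tendsto.2 fun _ hu =>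
    tendsto_setIntegral_of_tendsto_measure_frontier (Tendsto.comp (hκ y hy) hu)
      (fun B hB hBm => Tendsto.comp (hκS B hB hBm y hy) hu) hS f

theorem continuousOn_integral_compl_absorbing_general
    (𝒜 : X → Set A) (Q : Kernel (X × A) X) (η : Measure X) (Δ : Set X)
    (hbasic : BasicModel 𝒜 Q η) (hΔ : MeasurableSet Δ)
    (hW : CondW 𝒜 Q) (hscb : CondSCB 𝒜 Q Δ)
    (f : BoundedContinuousFunction X ℝ) :
    ContinuousOn (fun p : X × A => ∫ y in Δᶜ, f y ∂(Q p)) (Kset 𝒜) := by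
  have hQ : IsMarkovKernel Q := hbasic.2.2.2.2.1
  refine continuousOn_setIntegral_of_continuousOn_measure_frontier
    (κ := fun p => ⟨Q p, inferInstance⟩) (fun p hp => ?_) hΔ.compl ?_ f
  · exact ProbabilityMeasure.tendsto_iff_forall_integral_tendsto.2 fun g => hW.2.2.2 g p hp
  · rw [frontier_compl]
    exact hscb

/-- under Conditions (W) and (SCB), for any bounded continuous
`f : X → ℝ`, the map `(x,a) ↦ ∫_X f(y) 1_{Δᶜ}(y) Q(dy|x,a)` is continuous on `K`. -/
theorem continuousOn_integral_compl_absorbing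
    (𝒜 : X → Set A) (Q : Kernel (X × A) X) (η : Measure X) (Δ : Set X)
    (hbasic : BasicModel 𝒜 Q η) (hΔ : MeasurableSet Δ)
    (habs : IsAbsorbing 𝒜 Q η Δ)
    (hW : CondW 𝒜 Q) (hscb : CondSCB 𝒜 Q Δ)
    (f : BoundedContinuousFunction X ℝ) :
    ContinuousOn (fun p : X × A => ∫ y in Δᶜ, f y ∂(Q p)) (Kset 𝒜) :=
  continuousOn_integral_compl_absorbing_general 𝒜 Q η Δ hbasic hΔ hW hscb f
end
end

section
/- Suppose that 𝔐 is absorbing to Δ and satisfies the Conditions (W) and the Condition (SCB). Then the set C of finite nonnegative measures on X×A satisfying the characteristic equations is closed in the w-topology. -/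
/-!
Test the characteristic equations against bounded continuous `f ≥ 0` on `X`: `μ ∈ C` iff
`μ(Kᶜ) = 0` and `∫ f(x) dμ = ∫_{Δᶜ} f dη + ∫ (∫_{Δᶜ} f dQ(·|x,a)) dμ(x,a)` for all such `f`.
The set `K` is closed (compact values and upper semicontinuity of `A(·)`), so `{μ(Kᶜ) = 0}` is
weakly closed, and on it the inner integral may be replaced by any bounded continuous extension of
its restriction to `K` (Tietze), which makes both sides weakly continuous in `μ`.

That restriction is continuous: under (W) the integral of `f` over the open set `int Δᶜ` is lower
and over the closed set `cl Δᶜ` upper semicontinuous on `K`, and these differ from the integral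
over `Δᶜ` by integrals over subsets of `∂Δ`, which are continuous by (SCB) and the layer-cake
formula.
-/

open MeasureTheory ProbabilityTheory Topology Filter Set
open scoped ENNReal

noncomputable section

variable {X A : Type*}
  [MeasurableSpace X] [TopologicalSpace X] [PolishSpace X] [BorelSpace X]
  [MeasurableSpace A] [TopologicalSpace A] [PolishSpace A] [BorelSpace A]

open scoped BoundedContinuousFunction NNReal

section Semicontinuity

variable {Y γ : Type*} [TopologicalSpace Y] [LinearOrder γ] [TopologicalSpace γ] [OrderTopology γ]
  {a : ℕ → Y → γ} {b : Y → γ} {s : Set Y}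

theorem lowerSemicontinuousOn_of_tendsto_of_le (ha : ∀ n, ContinuousOn (a n) s)
    (hle : ∀ n, ∀ y ∈ s, a n y ≤ b y) (hlim : ∀ y ∈ s, Tendsto (a · y) atTop (𝓝 (b y))) :
    LowerSemicontinuousOn b s := by
  intro y hy c hc
  obtain ⟨n, hn⟩ := ((hlim y hy).eventually (lt_mem_nhds hc)).exists
  filter_upwards [(ha n y hy).eventually (lt_mem_nhds hn), self_mem_nhdsWithin] with z hz hzs
  exact hz.trans_le (hle n z hzs)

theorem upperSemicontinuousOn_of_tendsto_of_ge (ha : ∀ n, ContinuousOn (a n) s)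
    (hge : ∀ n, ∀ y ∈ s, b y ≤ a n y) (hlim : ∀ y ∈ s, Tendsto (a · y) atTop (𝓝 (b y))) :
    UpperSemicontinuousOn b s := by
  intro y hy c hc
  obtain ⟨n, hn⟩ := ((hlim y hy).eventually (gt_mem_nhds hc)).exists
  filter_upwards [(ha n y hy).eventually (gt_mem_nhds hn), self_mem_nhdsWithin] with z hz hzs
  exact (hge n z hzs).trans_lt hz

end Semicontinuity

theorem IsClosed.exists_seq_tendsto_indicator {Ω : Type*} [TopologicalSpace Ω]
    [HasOuterApproxClosed Ω] {F : Set Ω} (hF : IsClosed F) :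
    ∃ h : ℕ → Ω →ᵇ ℝ, (∀ n x, h n x ∈ Icc 0 1) ∧ (∀ n, ∀ x ∈ F, h n x = 1) ∧
      ∀ x, Tendsto (fun n => h n x) atTop (𝓝 (F.indicator 1 x)) := by
  refine ⟨fun n => (hF.apprSeq n).comp _ NNReal.isometry_coe.lipschitz,
    fun n x => ⟨(hF.apprSeq n x).2, ?_⟩, fun n x hx => ?_, fun x => ?_⟩
  · exact_mod_cast HasOuterApproxClosed.apprSeq_apply_le_one hF n x
  · simp [HasOuterApproxClosed.apprSeq_apply_eq_one hF n hx]
  · have hconv := NNReal.tendsto_coe.mpr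
      (tendsto_pi_nhds.mp (HasOuterApproxClosed.tendsto_apprSeq hF) x)
    by_cases hx : x ∈ F <;> simpa [hx] using hconv

section WeakContinuity

variable {Ω Y : Type*} [MeasurableSpace Ω] [TopologicalSpace Ω] [OpensMeasurableSpace Ω]
  [TopologicalSpace Y]

theorem tendsto_integral_mul_of_tendsto_indicator (ν : Measure Ω) [IsFiniteMeasure ν]
    (f : Ω →ᵇ ℝ) {h : ℕ → Ω →ᵇ ℝ} (h01 : ∀ n x, h n x ∈ Icc 0 1) {S : Set Ω}
    (hS : MeasurableSet S) (hlim : ∀ x, Tendsto (fun n => h n x) atTop (𝓝 (S.indicator 1 x))) :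
    Tendsto (fun n => ∫ x, (f * h n) x ∂ν) atTop (𝓝 (∫ x in S, f x ∂ν)) := by
  rw [← integral_indicator hS]
  refine tendsto_integral_of_dominated_convergence (fun _ => ‖f‖)
    (fun n => (f * h n).continuous.aestronglyMeasurable) (integrable_const _)
    (fun n => ae_of_all _ fun x => ?_) (ae_of_all _ fun x => ?_)
  · have hh : ‖h n x‖ ≤ 1 := by
      rw [Real.norm_of_nonneg (h01 n x).1]; exact (h01 n x).2
    simpa [norm_mul] using mul_le_mul (f.norm_coe_le_norm x) hh (norm_nonneg _) (norm_nonneg _)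
  · have hind : S.indicator f x = f x * S.indicator 1 x := by
      by_cases hx : x ∈ S <;> simp [hx]
    simpa [hind] using (hlim x).const_mul (f x)

variable [HasOuterApproxClosed Ω] {κ : Y → Measure Ω} [∀ y, IsFiniteMeasure (κ y)] {s : Set Y}
  {f : Ω →ᵇ ℝ}

theorem lowerSemicontinuousOn_setIntegral_of_isOpen
    (hκ : ∀ g : Ω →ᵇ ℝ, ContinuousOn (fun y => ∫ x, g x ∂κ y) s) (hf : ∀ x, 0 ≤ f x)
    {U : Set Ω} (hU : IsOpen U) :
    LowerSemicontinuousOn (fun y => ∫ x in U, f x ∂κ y) s := by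
  obtain ⟨h, h01, h1, hlim⟩ := hU.isClosed_compl.exists_seq_tendsto_indicator
  refine lowerSemicontinuousOn_of_tendsto_of_le (a := fun n y => ∫ x, (f * (1 - h n)) x ∂κ y)
    (fun n => hκ _) (fun n y _ => ?_) (fun y _ => tendsto_integral_mul_of_tendsto_indicator _ f
      (fun n x => ?_) hU.measurableSet fun x => ?_)
  · rw [← integral_indicator hU.measurableSet]
    refine integral_mono ((f * (1 - h n)).integrable _)
      ((f.integrable _).indicator hU.measurableSet) fun x => ?_
    by_cases hx : x ∈ U
    · simpa [hx] using mul_le_of_le_one_right (hf x) (sub_le_self 1 (h01 n x).1)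
    · simp [hx, h1 n x hx]
  · simpa using (h01 n x).symm
  · by_cases hx : x ∈ U <;> simpa [hx] using (hlim x).const_sub 1

theorem upperSemicontinuousOn_setIntegral_of_isClosed
    (hκ : ∀ g : Ω →ᵇ ℝ, ContinuousOn (fun y => ∫ x, g x ∂κ y) s) (hf : ∀ x, 0 ≤ f x)
    {F : Set Ω} (hF : IsClosed F) :
    UpperSemicontinuousOn (fun y => ∫ x in F, f x ∂κ y) s := by
  obtain ⟨h, h01, h1, hlim⟩ := hF.exists_seq_tendsto_indicator
  refine upperSemicontinuousOn_of_tendsto_of_ge (a := fun n y => ∫ x, (f * h n) x ∂κ y)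
    (fun n => hκ _) (fun n y _ => ?_) (fun y _ => tendsto_integral_mul_of_tendsto_indicator _ f
      h01 hF.measurableSet hlim)
  rw [← integral_indicator hF.measurableSet]
  refine integral_mono ((f.integrable _).indicator hF.measurableSet)
    ((f * h n).integrable _) fun x => ?_
  by_cases hx : x ∈ F
  · simp [hx, h1 n x hx]
  · simpa [hx] using mul_nonneg (hf x) (h01 n x).1

end WeakContinuity

section SetwiseContinuity

variable {Ω Y : Type*} [MeasurableSpace Ω] [TopologicalSpace Ω] [OpensMeasurableSpace Ω]
  [TopologicalSpace Y] [FirstCountableTopology Y] {κ : Y → Measure Ω}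
  [∀ y, IsProbabilityMeasure (κ y)] {s : Set Y} {f : Ω →ᵇ ℝ}

theorem continuousOn_setIntegral_of_continuousOn_measure {B : Set Ω} (hB : MeasurableSet B)
    (hκB : ∀ C ⊆ B, MeasurableSet C → ContinuousOn (fun y => κ y C) s) (hf : ∀ x, 0 ≤ f x) :
    ContinuousOn (fun y => ∫ x in B, f x ∂κ y) s := by
  have hlevel : ∀ t : ℝ, MeasurableSet {x | t ≤ f x} :=
    fun t => measurableSet_le measurable_const f.continuous.measurable
  have hlayer : ∀ y, ∫ x in B, f x ∂κ y = ∫ t in Ioc 0 ‖f‖, (κ y).real ({x | t ≤ f x} ∩ B) := by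
    intro y
    rw [(f.integrable _).integral_eq_integral_Ioc_meas_le (ae_of_all _ hf)
      (ae_of_all _ fun x => (le_abs_self _).trans (f.norm_coe_le_norm x))]
    exact setIntegral_congr_fun measurableSet_Ioc fun t _ => measureReal_restrict_apply (hlevel t)
  simp_rw [hlayer]
  refine continuousOn_of_dominated (bound := fun _ => 1) (fun y _ => ?_)
    (fun y _ => ae_of_all _ fun t => ?_) (integrable_const 1) (ae_of_all _ fun t => ?_)
  · refine (Antitone.measurable fun t₁ t₂ ht => ?_).aestronglyMeasurable
    exact measureReal_mono (inter_subset_inter_left _ fun x hx => ht.trans hx)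
  · exact (Real.norm_of_nonneg measureReal_nonneg).trans_le measureReal_le_one
  · exact ENNReal.continuousOn_toReal.comp
      (hκB _ inter_subset_right ((hlevel t).inter hB)) fun y _ => measure_ne_top _ _

variable [HasOuterApproxClosed Ω]

theorem continuousOn_setIntegral_of_continuousOn_frontier
    (hκ : ∀ g : Ω →ᵇ ℝ, ContinuousOn (fun y => ∫ x, g x ∂κ y) s) {t : Set Ω}
    (ht : MeasurableSet t)
    (hfr : ∀ C ⊆ frontier t, MeasurableSet C → ContinuousOn (fun y => κ y C) s)
    (hf : ∀ x, 0 ≤ f x) :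
    ContinuousOn (fun y => ∫ x in t, f x ∂κ y) s := by
  have hinner : ContinuousOn (fun y => ∫ x in t \ interior t, f x ∂κ y) s :=
    continuousOn_setIntegral_of_continuousOn_measure (ht.diff measurableSet_interior)
      (fun C hC => hfr C (hC.trans (sdiff_subset_sdiff_left subset_closure))) hf
  have houter : ContinuousOn (fun y => ∫ x in closure t \ t, f x ∂κ y) s :=
    continuousOn_setIntegral_of_continuousOn_measure (measurableSet_closure.diff ht)
      (fun C hC => hfr C (hC.trans (sdiff_subset_sdiff_right interior_subset))) hf
  have hsplit_inner : (fun y => ∫ x in t, f x ∂κ y)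
      = fun y => ∫ x in interior t, f x ∂κ y + ∫ x in t \ interior t, f x ∂κ y := by
    ext y
    rw [setIntegral_sdiff measurableSet_interior (f.integrable _).integrableOn interior_subset]
    ring
  have hsplit_outer : (fun y => ∫ x in t, f x ∂κ y)
      = fun y => ∫ x in closure t, f x ∂κ y + -∫ x in closure t \ t, f x ∂κ y := by
    ext y
    rw [setIntegral_sdiff ht (f.integrable _).integrableOn subset_closure]
    ring
  rw [continuousOn_iff_lower_upperSemicontinuousOn]
  constructor
  · rw [hsplit_inner]
    exact (lowerSemicontinuousOn_setIntegral_of_isOpen hκ hf isOpen_interior).add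
      hinner.lowerSemicontinuousOn
  · rw [hsplit_outer]
    exact (upperSemicontinuousOn_setIntegral_of_isClosed hκ hf isClosed_closure).add
      houter.neg.upperSemicontinuousOn

end SetwiseContinuity

theorem exists_boundedContinuousFunction_eqOn_setLIntegral {Ω Y : Type*} [MeasurableSpace Ω]
    [TopologicalSpace Ω] [OpensMeasurableSpace Ω] [HasOuterApproxClosed Ω] [TopologicalSpace Y]
    [FirstCountableTopology Y] [NormalSpace Y] {κ : Y → Measure Ω}
    [∀ y, IsProbabilityMeasure (κ y)] {s : Set Y} (hs : IsClosed s)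
    (hκ : ∀ g : Ω →ᵇ ℝ, ContinuousOn (fun y => ∫ x, g x ∂κ y) s) {t : Set Ω}
    (ht : MeasurableSet t)
    (hfr : ∀ C ⊆ frontier t, MeasurableSet C → ContinuousOn (fun y => κ y C) s)
    (f : Ω →ᵇ ℝ≥0) :
    ∃ g : Y →ᵇ ℝ≥0, EqOn (fun y => (g y : ℝ≥0∞)) (fun y => ∫⁻ x in t, f x ∂κ y) s := by
  set fR : Ω →ᵇ ℝ := f.comp _ NNReal.isometry_coe.lipschitz
  have hfR : ∀ x, 0 ≤ fR x := fun x => (f x).2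
  have hmem : ∀ y, ∫ x in t, fR x ∂κ y ∈ Icc 0 ‖fR‖ := fun y =>
    ⟨setIntegral_nonneg ht fun x _ => hfR x,
      (setIntegral_le_integral (fR.integrable _) (ae_of_all _ hfR)).trans
        ((le_abs_self _).trans (fR.norm_integral_le_norm _))⟩
  have hcont := continuousOn_setIntegral_of_continuousOn_frontier hκ ht hfr hfR
  set G : s →ᵇ ℝ := .ofNormedAddCommGroup _ (continuousOn_iff_continuous_domRestrict.mp hcont)
    ‖fR‖ fun y => (Real.norm_of_nonneg (hmem y).1).trans_le (hmem y).2
  obtain ⟨g, -, hgG⟩ := BoundedContinuousFunction.exists_forall_mem_domRestrict_eq_of_closed G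
    hs (fun y => hmem y) ⟨0, left_mem_Icc.mpr (norm_nonneg _)⟩
  refine ⟨g.nnrealPart, fun y hy => ?_⟩
  have hgy : g y = ∫ x in t, fR x ∂κ y := DFunLike.congr_fun hgG ⟨y, hy⟩
  change ENNReal.ofReal (g y) = _
  rw [hgy, ofReal_integral_eq_lintegral_ofReal (fR.integrable _).integrableOn (ae_of_all _ hfR)]
  simp [fR]

theorem isClosed_Kset {α β : Type*} [TopologicalSpace α] [TopologicalSpace β] [T2Space β]
    {𝒜 : α → Set β} (hcomp : ∀ x, IsCompact (𝒜 x))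
    (husc : ∀ (x : α) (U : Set β), IsOpen U → 𝒜 x ⊆ U → ∀ᶠ y in 𝓝 x, 𝒜 y ⊆ U) :
    IsClosed (Kset 𝒜) := by
  rw [← isOpen_compl_iff, isOpen_iff_mem_nhds]
  rintro ⟨x, a⟩ (ha : a ∉ 𝒜 x)
  obtain ⟨U, V, hU, hV, hAU, haV, hUV⟩ := SeparatedNhds.of_isCompact_isCompact (hcomp x)
    isCompact_singleton (disjoint_singleton_right.mpr ha)
  rw [nhds_prod_eq]
  filter_upwards [prod_mem_prod (husc x U hU hAU) (hV.mem_nhds (haV rfl))]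
  rintro ⟨y, b⟩ ⟨hy, hb⟩ (hyb : b ∈ 𝒜 y)
  exact disjoint_left.mp hUV (hy hyb) hb

theorem MeasureTheory.FiniteMeasure.isClosed_setOf_apply_eq_zero {Ω : Type*} [MeasurableSpace Ω]
    [TopologicalSpace Ω] [OpensMeasurableSpace Ω] [HasOuterApproxClosed Ω] {U : Set Ω}
    (hU : IsOpen U) : IsClosed {μ : FiniteMeasure Ω | (μ : Measure Ω) U = 0} := by
  have hlsc := lowerSemicontinuousOn_setIntegral_of_isOpen
    (κ := ((↑) : FiniteMeasure Ω → Measure Ω)) (s := univ)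
    (fun g => (FiniteMeasure.continuous_integral_boundedContinuousFunction g).continuousOn)
    (f := 1) (fun _ => zero_le_one) hU
  rw [lowerSemicontinuousOn_univ_iff] at hlsc
  convert hlsc.isClosed_preimage 0 using 1
  ext μ
  simp only [mem_ofPred_eq, mem_preimage, mem_Iic, BoundedContinuousFunction.coe_one, Pi.one_apply,
    setIntegral_const, smul_eq_mul, mul_one]
  rw [measureReal_nonneg.ge_iff_eq', measureReal_eq_zero_iff]

theorem setLIntegral_bind {γ δ : Type*} [MeasurableSpace γ] [MeasurableSpace δ]
    (κ : Kernel γ δ) (m : Measure γ) {S : Set δ} (hS : MeasurableSet S) {f : δ → ℝ≥0∞}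
    (hf : Measurable f) :
    ∫⁻ x in S, f x ∂(m.bind κ) = ∫⁻ a, ∫⁻ x in S, f x ∂κ a ∂m := by
  rw [← lintegral_indicator hS,
    Measure.lintegral_bind κ.aemeasurable (hf.indicator hS).aemeasurable]
  simp_rw [lintegral_indicator hS]

section CharacteristicEquations

variable {α β : Type*} [MeasurableSpace α] [MeasurableSpace β] {𝒜 : α → Set β}
  {Q : Kernel (α × β) α} {η : Measure α} {Δ : Set α} {μ : FiniteMeasure (α × β)}

theorem mem_charSet_iff_map_fst_eq (hΔ : MeasurableSet Δ) :
    μ ∈ charSet 𝒜 Q η Δ ↔ (μ : Measure (α × β)) (Kset 𝒜)ᶜ = 0 ∧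
      (μ : Measure (α × β)).map Prod.fst = (η + (μ : Measure (α × β)).bind Q).restrict Δᶜ := by
  refine and_congr_right fun _ => ?_
  rw [Measure.ext_iff]
  refine forall₂_congr fun B hB => ?_
  rw [Measure.map_apply measurable_fst hB, ← prod_univ, Measure.restrict_apply hB,
    Measure.add_apply, Measure.bind_apply (hB.inter hΔ.compl) Q.aemeasurable]

theorem mem_charSet_iff [TopologicalSpace α] [HasOuterApproxClosed α] [BorelSpace α]
    [IsMarkovKernel Q] [IsFiniteMeasure η] (hΔ : MeasurableSet Δ) :
    μ ∈ charSet 𝒜 Q η Δ ↔ (μ : Measure (α × β)) (Kset 𝒜)ᶜ = 0 ∧ ∀ f : α →ᵇ ℝ≥0,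
      ∫⁻ p, f p.1 ∂(μ : Measure (α × β))
        = ∫⁻ x in Δᶜ, f x ∂η + ∫⁻ p, ∫⁻ x in Δᶜ, f x ∂Q p ∂(μ : Measure (α × β)) := by
  rw [mem_charSet_iff_map_fst_eq hΔ]
  refine and_congr_right fun _ => (⟨fun h f => by rw [h],
    ext_of_forall_lintegral_eq_of_IsFiniteMeasure⟩ : _ ↔ ∀ f : α →ᵇ ℝ≥0, _).trans
    (forall_congr' fun f => ?_)
  rw [lintegral_map f.measurable_coe_ennreal_comp measurable_fst, Measure.restrict_add,
    lintegral_add_measure, setLIntegral_bind Q _ hΔ.compl f.measurable_coe_ennreal_comp]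

end CharacteristicEquations

theorem charSet_isClosed_general
    (𝒜 : X → Set A) (Q : Kernel (X × A) X) (η : Measure X) (Δ : Set X)
    (hbasic : BasicModel 𝒜 Q η) (hΔ : MeasurableSet Δ)
    (hW : CondW 𝒜 Q) (hscb : CondSCB 𝒜 Q Δ) :
    IsClosed (charSet 𝒜 Q η Δ) := by
  obtain ⟨-, -, -, -, hQ, hη⟩ := hbasic
  have hK : IsClosed (Kset 𝒜) := isClosed_Kset hW.1 hW.2.1
  choose g hg using fun f : X →ᵇ ℝ≥0 => exists_boundedContinuousFunction_eqOn_setLIntegral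
    (κ := Q) hK hW.2.2.2 hΔ.compl (by rwa [frontier_compl]) f
  have hchar : charSet 𝒜 Q η Δ
      = {μ : FiniteMeasure (X × A) | (μ : Measure (X × A)) (Kset 𝒜)ᶜ = 0} ∩
        ⋂ f : X →ᵇ ℝ≥0, {μ : FiniteMeasure (X × A) | ∫⁻ p, f p.1 ∂(μ : Measure (X × A))
          = ∫⁻ x in Δᶜ, f x ∂η + ∫⁻ p, g f p ∂(μ : Measure (X × A))} := by
    ext μ
    rw [mem_charSet_iff hΔ, mem_inter_iff, mem_iInter]
    refine and_congr_right fun h0 => forall_congr' fun f => ?_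
    rw [lintegral_congr_ae ((measure_eq_zero_iff_ae_notMem.mp h0).mono
      fun p hp => (hg f (not_not.mp hp)).symm)]
    rfl
  rw [hchar]
  refine (FiniteMeasure.isClosed_setOf_apply_eq_zero hK.isOpen_compl).inter
    (isClosed_iInter fun f => isClosed_eq ?_ (continuous_const.add ?_))
  · exact FiniteMeasure.continuous_lintegral_boundedContinuousFunction
      (f.compContinuous ⟨Prod.fst, continuous_fst⟩)
  · exact FiniteMeasure.continuous_lintegral_boundedContinuousFunction (g f)

/-- under Conditions (W) and (SCB), the set `C` of finite
measures satisfying the characteristic equations is closed in the weak topology. -/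
theorem charSet_isClosed
    (𝒜 : X → Set A) (Q : Kernel (X × A) X) (η : Measure X) (Δ : Set X)
    (hbasic : BasicModel 𝒜 Q η) (hΔ : MeasurableSet Δ)
    (habs : IsAbsorbing 𝒜 Q η Δ)
    (hW : CondW 𝒜 Q) (hscb : CondSCB 𝒜 Q Δ) :
    IsClosed (charSet 𝒜 Q η Δ) :=
  charSet_isClosed_general 𝒜 Q η Δ hbasic hΔ hW hscb
end
end
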